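/- Let P and Q be polytopes in ℝ^d, and let φ be an injection from the vertex set of P into the vertex set of P + Q such that for every vertex u of P, φ(u) = u + v for some vertex v of Q. If φ is a bijection onto the vertex set of P + Q, then the normal fans of P and P + Q coincide; that is, for every vector c, {c' : F_P(c) ⊆ F_P(c')} = {c' : F_{P+Q}(c) ⊆ F_{P+Q}(c')}. -/

import Mathlib

open Pointwise
open scoped RealInnerProductSpace

noncomputable section

abbrev Esp (d : ℕ) := EuclideanSpace ℝ (Fin d)

def IsPolytope {d : ℕ} (P : Set (Esp d)) : Prop :=
  ∃ s : Finset (Esp d), s.Nonempty ∧ P = convexHull ℝ (s : Set (Esp d))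

def polyFace {d : ℕ} (P : Set (Esp d)) (c : Esp d) : Set (Esp d) :=
  {x | x ∈ P ∧ ∀ y ∈ P, ⟪c, x⟫ ≤ ⟪c, y⟫}

def polyVerts {d : ℕ} (P : Set (Esp d)) : Set (Esp d) :=
  Set.extremePoints ℝ P

def f0 {d : ℕ} (P : Set (Esp d)) : ℕ := (polyVerts P).ncard

def polyAdj {d : ℕ} (P : Set (Esp d)) (u v : Esp d) : Prop :=
  u ≠ v ∧ u ∈ polyVerts P ∧ v ∈ polyVerts P ∧
    ∃ c : Esp d, polyFace P c = segment ℝ u v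

def polyGraph {d : ℕ} (P : Set (Esp d)) : SimpleGraph (Esp d) where
  Adj u v := polyAdj P u v
  symm := by
    constructor
    rintro u v ⟨hne, hu, hv, c, hc⟩
    exact ⟨hne.symm, hv, hu, c, by rw [hc, segment_symm]⟩
  loopless := by constructor; rintro u ⟨hne, -⟩; exact hne rfl

def polyDiam {d : ℕ} (P : Set (Esp d)) : ℕ :=
  sSup {n : ℕ | ∃ u ∈ polyVerts P, ∃ v ∈ polyVerts P, n = (polyGraph P).dist u v}

def polyDim {d : ℕ} (P : Set (Esp d)) : ℕ :=
  Module.finrank ℝ (affineSpan ℝ P).direction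

def IsFace {d : ℕ} (P F : Set (Esp d)) : Prop := ∃ c : Esp d, polyFace P c = F

def gammaVerts {d : ℕ} (P Q : Set (Esp d)) (u : Esp d) : Set (Esp d) :=
  {w ∈ polyVerts (P + Q) | ∃ v ∈ polyVerts Q, w = u + v}

/-! A face of a Minkowski sum splits, `F_{P+Q}(c) = F_P(c) + F_Q(c)`, so the claim reduces to
showing that `F_P(c) ⊆ F_P(c')` forces `F_Q(c) ⊆ F_Q(c')`, and by Krein–Milman it suffices to
check this on the vertices `w` of `F_Q(c)`. The key observation is that for all `c, c₁` a vertex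
of the iterated face `F_{F_{P+Q}(c)}(c₁)` is a vertex of `P + Q`, hence equal to `φ u` for a
vertex `u` of `P`, and then `u` and `φ u - u` lie in the corresponding iterated faces of `P` and
`Q`. Taking `c₁` to expose `w` in `Q` yields a vertex `u ∈ F_P(c) ⊆ F_P(c')` with
`φ u = u + w`; taking `c₁` to expose `u` in `P`, now over `c'`, shows `w = φ u - u ∈ F_Q(c')`. -/

open Set

theorem IsCompact.subset_of_extremePoints_subset {E : Type*} [AddCommGroup E] [Module ℝ E]
    [TopologicalSpace E] [T2Space E] [IsTopologicalAddGroup E] [ContinuousSMul ℝ E]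
    [LocallyConvexSpace ℝ E] {K C : Set E} (hK : IsCompact K) (hKconv : Convex ℝ K)
    (hCconv : Convex ℝ C) (hC : IsClosed C) (h : K.extremePoints ℝ ⊆ C) : K ⊆ C := by
  rw [← closure_convexHull_extremePoints hK hKconv]
  exact closure_minimal (convexHull_min h hCconv) hC

section Faces

variable {d : ℕ} {P Q S : Set (Esp d)} {c : Esp d}

theorem polyFace_eq_toExposed (P : Set (Esp d)) (c : Esp d) :
    polyFace P c = (-innerSL ℝ c).toExposed P := by
  ext x
  simp [polyFace, ContinuousLinearMap.toExposed]

theorem isExposed_polyFace : IsExposed ℝ P (polyFace P c) :=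
  polyFace_eq_toExposed P c ▸ ContinuousLinearMap.toExposed.isExposed

theorem isExtreme_polyFace : IsExtreme ℝ P (polyFace P c) :=
  isExposed_polyFace.isExtreme

theorem polyFace_subset : polyFace P c ⊆ P :=
  fun _ hx => hx.1

theorem convex_polyFace (hP : Convex ℝ P) (c : Esp d) : Convex ℝ (polyFace P c) :=
  isExposed_polyFace.convex hP

theorem isClosed_polyFace (hP : IsClosed P) (c : Esp d) : IsClosed (polyFace P c) :=
  isExposed_polyFace.isClosed hP

theorem isCompact_polyFace (hP : IsCompact P) (c : Esp d) : IsCompact (polyFace P c) :=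
  isExposed_polyFace.isCompact hP

theorem polyFace_nonempty (hP : IsCompact P) (hne : P.Nonempty) (c : Esp d) :
    (polyFace P c).Nonempty := by
  obtain ⟨x, hx, hmin⟩ :=
    hP.exists_isMinOn hne (innerSL ℝ c).continuous.continuousOn
  exact ⟨x, hx, isMinOn_iff.1 hmin⟩

theorem mem_polyFace_of_add_mem_polyFace_add {x y : Esp d} (hx : x ∈ P) (hy : y ∈ Q)
    (h : x + y ∈ polyFace (P + Q) c) : x ∈ polyFace P c ∧ y ∈ polyFace Q c := by
  refine ⟨⟨hx, fun x' hx' => ?_⟩, ⟨hy, fun y' hy' => ?_⟩⟩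
  · have := h.2 _ (add_mem_add hx' hy)
    simp only [inner_add_right] at this
    linarith
  · have := h.2 _ (add_mem_add hx hy')
    simp only [inner_add_right] at this
    linarith

theorem polyFace_add : polyFace (P + Q) c = polyFace P c + polyFace Q c := by
  refine Subset.antisymm ?_ ?_
  · intro z hz
    obtain ⟨x, hx, y, hy, rfl⟩ := hz.1
    obtain ⟨hxc, hyc⟩ := mem_polyFace_of_add_mem_polyFace_add hx hy hz
    exact add_mem_add hxc hyc
  · rintro _ ⟨x, hx, y, hy, rfl⟩
    refine ⟨add_mem_add hx.1 hy.1, ?_⟩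
    rintro _ ⟨x', hx', y', hy', rfl⟩
    simp only [inner_add_right]
    exact add_le_add (hx.2 x' hx') (hy.2 y' hy')

theorem polyFace_eq_singleton_of_subset {u : Esp d} (h : polyFace P c = {u}) (hu : u ∈ S)
    (hS : S ⊆ P) : polyFace S c = {u} := by
  have huc : u ∈ polyFace P c := h ▸ rfl
  ext x
  constructor
  · intro hx
    rw [← h]
    exact ⟨hS hx.1, fun y hy => (hx.2 u hu).trans (huc.2 y hy)⟩
  · rintro rfl
    exact ⟨hu, fun y hy => huc.2 y (hS hy)⟩

end Faces

namespace IsPolytope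

variable {d : ℕ} {P Q : Set (Esp d)}

theorem isCompact (hP : IsPolytope P) : IsCompact P := by
  obtain ⟨s, -, rfl⟩ := hP
  exact s.finite_toSet.isCompact_convexHull (𝕜 := ℝ)

theorem convex (hP : IsPolytope P) : Convex ℝ P := by
  obtain ⟨s, -, rfl⟩ := hP
  exact convex_convexHull ℝ _

theorem nonempty (hP : IsPolytope P) : P.Nonempty := by
  obtain ⟨s, ⟨x, hx⟩, rfl⟩ := hP
  exact ⟨x, subset_convexHull ℝ _ hx⟩

theorem add (hP : IsPolytope P) (hQ : IsPolytope Q) : IsPolytope (P + Q) := by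
  classical
  obtain ⟨s, hs, rfl⟩ := hP
  obtain ⟨t, ht, rfl⟩ := hQ
  exact ⟨s + t, hs.add ht, by rw [Finset.coe_add, convexHull_add]⟩

theorem exists_polyFace_eq_singleton (hP : IsPolytope P) {w : Esp d} (hw : w ∈ polyVerts P) :
    ∃ c, polyFace P c = {w} := by
  obtain ⟨s, -, rfl⟩ := hP
  have hws : w ∈ (s : Set (Esp d)) := extremePoints_convexHull_subset hw
  have hwK : w ∉ convexHull ℝ ((s : Set (Esp d)) \ {w}) := fun hwK =>
    (extremePoints_convexHull_subset (inter_extremePoints_subset_extremePoints_of_subset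
      (convexHull_mono sdiff_subset) ⟨hwK, hw⟩)).2 rfl
  obtain ⟨f, a, hfw, hfK⟩ := geometric_hahn_banach_point_closed (convex_convexHull ℝ _)
    (s.finite_toSet.sdiff.isCompact_convexHull (𝕜 := ℝ)).isClosed hwK
  set c := (InnerProductSpace.toDual ℝ (Esp d)).symm f
  have hc (x : Esp d) : ⟪c, x⟫ = f x := InnerProductSpace.toDual_symm_apply
  have hPc : IsCompact (convexHull ℝ (s : Set (Esp d))) :=
    s.finite_toSet.isCompact_convexHull (𝕜 := ℝ)
  refine ⟨c, (polyFace_nonempty hPc ⟨w, subset_convexHull ℝ _ hws⟩ c).subset_singleton_iff.1 ?_⟩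
  refine (isCompact_polyFace hPc c).subset_of_extremePoints_subset
    (convex_polyFace (convex_convexHull ℝ _) c) (convex_singleton w) isClosed_singleton ?_
  intro y hy
  have hys : y ∈ (s : Set (Esp d)) := extremePoints_convexHull_subset
    (isExtreme_polyFace.extremePoints_subset_extremePoints hy)
  by_contra hyw
  have hlt : ⟪c, w⟫ < ⟪c, y⟫ := by
    rw [hc, hc]
    exact hfw.trans (hfK y (subset_convexHull ℝ _ ⟨hys, hyw⟩))
  exact hlt.not_ge (hy.1.2 w (subset_convexHull ℝ _ hws))

end IsPolytope

section VertexMap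

variable {d : ℕ} {P Q : Set (Esp d)} {φ : Esp d → Esp d}

theorem exists_vertex_mem_polyFace_polyFace (hP : IsPolytope P) (hQ : IsPolytope Q)
    (hφ : ∀ u ∈ polyVerts P, φ u - u ∈ Q) (hsurj : SurjOn φ (polyVerts P) (polyVerts (P + Q)))
    (c c₁ : Esp d) :
    ∃ u ∈ polyVerts P, u ∈ polyFace (polyFace P c) c₁ ∧ φ u - u ∈ polyFace (polyFace Q c) c₁ := by
  have hPQ := hP.add hQ
  have hFc := isCompact_polyFace hPQ.isCompact c
  obtain ⟨z, hz⟩ := (isCompact_polyFace hFc c₁).extremePoints_nonempty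
    (polyFace_nonempty hFc (polyFace_nonempty hPQ.isCompact hPQ.nonempty c) c₁)
  obtain ⟨u, hu, rfl⟩ :=
    hsurj ((isExtreme_polyFace.trans isExtreme_polyFace).extremePoints_subset_extremePoints hz)
  have hzG : u + (φ u - u) ∈ polyFace (polyFace (P + Q) c) c₁ := by
    rw [add_sub_cancel]
    exact hz.1
  obtain ⟨huc, hvc⟩ :=
    mem_polyFace_of_add_mem_polyFace_add (extremePoints_subset hu) (hφ u hu) hzG.1
  rw [polyFace_add] at hzG
  exact ⟨u, hu, mem_polyFace_of_add_mem_polyFace_add huc hvc hzG⟩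

theorem sub_mem_polyFace_of_mem_polyFace (hP : IsPolytope P) (hQ : IsPolytope Q)
    (hφ : ∀ u ∈ polyVerts P, φ u - u ∈ Q) (hsurj : SurjOn φ (polyVerts P) (polyVerts (P + Q)))
    {u c : Esp d} (hu : u ∈ polyVerts P) (huc : u ∈ polyFace P c) : φ u - u ∈ polyFace Q c := by
  obtain ⟨c₁, hc₁⟩ := hP.exists_polyFace_eq_singleton hu
  obtain ⟨u₀, -, hu₀, hv₀⟩ := exists_vertex_mem_polyFace_polyFace hP hQ hφ hsurj c c₁
  rw [polyFace_eq_singleton_of_subset hc₁ huc polyFace_subset] at hu₀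
  obtain rfl : u₀ = u := hu₀
  exact polyFace_subset hv₀

theorem exists_vertex_sub_eq_of_mem_polyFace (hP : IsPolytope P) (hQ : IsPolytope Q)
    (hφ : ∀ u ∈ polyVerts P, φ u - u ∈ Q) (hsurj : SurjOn φ (polyVerts P) (polyVerts (P + Q)))
    {w c : Esp d} (hw : w ∈ polyVerts Q) (hwc : w ∈ polyFace Q c) :
    ∃ u ∈ polyVerts P, u ∈ polyFace P c ∧ φ u - u = w := by
  obtain ⟨c₁, hc₁⟩ := hQ.exists_polyFace_eq_singleton hw
  obtain ⟨u, hu, huc, hv⟩ := exists_vertex_mem_polyFace_polyFace hP hQ hφ hsurj c c₁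
  rw [polyFace_eq_singleton_of_subset hc₁ hwc polyFace_subset] at hv
  exact ⟨u, hu, polyFace_subset huc, hv⟩

theorem polyFace_subset_polyFace_of_subset (hP : IsPolytope P) (hQ : IsPolytope Q)
    (hφ : ∀ u ∈ polyVerts P, φ u - u ∈ Q) (hsurj : SurjOn φ (polyVerts P) (polyVerts (P + Q)))
    {c c' : Esp d} (h : polyFace P c ⊆ polyFace P c') : polyFace Q c ⊆ polyFace Q c' := by
  refine (isCompact_polyFace hQ.isCompact c).subset_of_extremePoints_subset
    (convex_polyFace hQ.convex c) (convex_polyFace hQ.convex c')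
    (isClosed_polyFace hQ.isCompact.isClosed c') fun w hw => ?_
  obtain ⟨u, hu, huc, rfl⟩ := exists_vertex_sub_eq_of_mem_polyFace hP hQ hφ hsurj
    (isExtreme_polyFace.extremePoints_subset_extremePoints hw) hw.1
  exact sub_mem_polyFace_of_mem_polyFace hP hQ hφ hsurj hu (h huc)

end VertexMap

theorem stmt12 {d : ℕ} (P Q : Set (Esp d)) (hP : IsPolytope P) (hQ : IsPolytope Q)
    (φ : Esp d → Esp d)
    (hφ : ∀ u ∈ polyVerts P, ∃ v ∈ polyVerts Q, φ u = u + v)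
    (hbij : Set.BijOn φ (polyVerts P) (polyVerts (P + Q))) :
    ∀ c : Esp d,
      {c' : Esp d | polyFace P c ⊆ polyFace P c'} =
      {c' : Esp d | polyFace (P + Q) c ⊆ polyFace (P + Q) c'} := by
  have hφQ : ∀ u ∈ polyVerts P, φ u - u ∈ Q := fun u hu => by
    obtain ⟨v, hv, hφu⟩ := hφ u hu
    rw [hφu, add_sub_cancel_left]
    exact extremePoints_subset hv
  intro c
  ext c'
  constructor
  · intro h
    change polyFace (P + Q) c ⊆ polyFace (P + Q) c'
    rw [polyFace_add, polyFace_add]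
    exact add_subset_add h (polyFace_subset_polyFace_of_subset hP hQ hφQ hbij.surjOn h)
  · intro h x hx
    obtain ⟨y, hy⟩ := polyFace_nonempty hQ.isCompact hQ.nonempty c
    have hxy : x + y ∈ polyFace (P + Q) c := polyFace_add ▸ add_mem_add hx hy
    exact (mem_polyFace_of_add_mem_polyFace_add hx.1 hy.1 (h hxy)).1
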